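/- arXiv:2512.13455 — 5 statements merged into one kernel-verified Lean document; each statement's English description precedes it below -/
import Mathlib

section
/- Let F_1,…,F_n be rational functions of the n+1 variables (t, z_1,…,z_n), let Ā = [A_0 | A] ∈ M_{r×(n+1)}(ℤ) with first column A_0, and fix λ ∈ (ℝ∖{0})^r. Let I ⊂ ℝ be an open interval with 0 ∉ I and let z : I → (ℝ∖{0})^n be differentiable with dz_i/dt = (z_i(t)/t)·F_i(t, z(t)) for all t ∈ I and all i (each F_i being defined along the trajectory). Then the scaled curve w(s) := λ^A * z(λ^{−A_0} s), defined for s in the interval λ^{A_0}·I, satisfies dw_i/ds = (w_i(s)/s)·F_i(s, w(s)) for all s and all i if and only if F_i(λ^{Ā} * (t, z(t))) = F_i(t, z(t)) for all t ∈ I and all i. (Here λ^{A_0} is the nonzero scalar ∏_k λ_k^{(A_0)_k}.) -/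
/-- For rational functions `F i` of `(t, z₁, …, z_n)`, an integer matrix
`Ā = [A₀ | A] ∈ M_{r×(n+1)}(ℤ)` and a scaling vector `λ ∈ (ℝ∖{0})^r`, the scaled curve
`w(s) = λ^A * z(λ^{-A₀} s)` solves `dw_i/ds = (w_i/s)·F_i(s, w(s))` on `λ^{A₀}·I`
if and only if all the `F_i` are invariant along the trajectory:
`F_i(λ^Ā * (t, z(t))) = F_i(t, z(t))` for all `t ∈ I`. -/
theorem scaled_curve_solves_iff_invariant (n r : ℕ)
    (F : Fin n → ℝ → (Fin n → ℝ) → ℝ)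
    (A0 : Fin r → ℤ) (A : Matrix (Fin r) (Fin n) ℤ)
    (lam : Fin r → ℝ) (hlam : ∀ k, lam k ≠ 0)
    (I : Set ℝ) (hIopen : IsOpen I) (hIconv : Convex ℝ I) (h0I : (0 : ℝ) ∉ I)
    (z : ℝ → Fin n → ℝ) (hznz : ∀ t ∈ I, ∀ i, z t i ≠ 0)
    (hode : ∀ t ∈ I, ∀ i, HasDerivAt (fun s => z s i) ((z t i / t) * F i t (z t)) t) :
    (∀ s : ℝ, ((∏ k, lam k ^ (-(A0 k))) * s) ∈ I → ∀ i : Fin n,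
        HasDerivAt
          (fun s' => (∏ k, lam k ^ A k i) * z ((∏ k, lam k ^ (-(A0 k))) * s') i)
          (((∏ k, lam k ^ A k i) * z ((∏ k, lam k ^ (-(A0 k))) * s) i / s) *
            F i s (fun j => (∏ k, lam k ^ A k j) * z ((∏ k, lam k ^ (-(A0 k))) * s) j)) s)
    ↔ (∀ t ∈ I, ∀ i : Fin n,
        F i ((∏ k, lam k ^ A0 k) * t) (fun j => (∏ k, lam k ^ A k j) * z t j)
          = F i t (z t)) := by
  set c : ℝ := ∏ k, lam k ^ A0 k with hc
  have hcne : c ≠ 0 := Finset.prod_ne_zero_iff.2 fun k _ => zpow_ne_zero _ (hlam k)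
  have hcinv : (∏ k, lam k ^ (-(A0 k))) = c⁻¹ := by
    rw [hc, ← Finset.prod_inv_distrib]
    exact Finset.prod_congr rfl fun k _ => zpow_neg _ _
  have hmne : ∀ i, (∏ k, lam k ^ A k i) ≠ 0 :=
    fun i => Finset.prod_ne_zero_iff.2 fun k _ => zpow_ne_zero _ (hlam k)
  have htne : ∀ t ∈ I, t ≠ 0 := fun t ht h0 => h0I (h0 ▸ ht)
  constructor
  · intro H t ht i
    set m : ℝ := ∏ k, lam k ^ A k i with hm
    have hct : (∏ k, lam k ^ (-(A0 k))) * (c * t) = t := by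
      rw [hcinv]; field_simp
    have h1 := H (c * t) (by rw [hct]; exact ht) i
    rw [hct] at h1
    simp only [hcinv] at h1
    -- the actual derivative from the ODE
    have hz := hode t ht i
    have h3 : c⁻¹ * (c * t) = t := by field_simp
    have hz' : HasDerivAt (fun s => z s i) ((z t i / t) * F i t (z t)) (c⁻¹ * (c * t)) := by
      rw [h3]; exact hz
    have hlin : HasDerivAt (fun s' : ℝ => c⁻¹ * s') c⁻¹ (c * t) := by
      simpa using (hasDerivAt_id (c * t)).const_mul c⁻¹
    have h2 : HasDerivAt (fun s' => m * z (c⁻¹ * s') i)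
        (m * ((z t i / t) * F i t (z t) * c⁻¹)) (c * t) := by
      have := hz'.comp (c * t) hlin
      simpa [mul_comm, mul_assoc, mul_left_comm] using this.const_mul m
    have huniq := h1.unique h2
    have hwne : m * z t i ≠ 0 := mul_ne_zero (hmne i) (hznz t ht i)
    have hs : (c * t) ≠ 0 := mul_ne_zero hcne (htne t ht)
    have hfac : m * z t i / (c * t) ≠ 0 := div_ne_zero hwne hs
    have : F i (c * t) (fun j => (∏ k, lam k ^ A k j) * z t j) = F i t (z t) := by
      have h4 : m * ((z t i / t) * F i t (z t) * c⁻¹)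
          = (m * z t i / (c * t)) * F i t (z t) := by
        field_simp [hcne, htne t ht]
      rw [h4] at huniq
      exact mul_left_cancel₀ hfac huniq
    exact this
  · intro H s hs i
    set m : ℝ := ∏ k, lam k ^ A k i with hm
    set t : ℝ := (∏ k, lam k ^ (-(A0 k))) * s with ht
    have htI : t ∈ I := hs
    have hz := hode t htI i
    have hder : HasDerivAt (fun s' => m * z ((∏ k, lam k ^ (-(A0 k))) * s') i)
        (m * ((z t i / t) * F i t (z t) * (∏ k, lam k ^ (-(A0 k))))) s := by
      have hlin : HasDerivAt (fun s' : ℝ => (∏ k, lam k ^ (-(A0 k))) * s')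
          (∏ k, lam k ^ (-(A0 k))) s := by
        simpa using (hasDerivAt_id s).const_mul (∏ k, lam k ^ (-(A0 k)))
      exact ((hz.comp s hlin)).const_mul m
    have hsne : s ≠ 0 := by
      intro h0
      apply h0I
      have : t = 0 := by rw [ht, h0, mul_zero]
      rw [← this]; exact htI
    have hst : c * t = s := by rw [ht, hcinv]; field_simp
    have hFeq : F i s (fun j => (∏ k, lam k ^ A k j) * z t j) = F i t (z t) := by
      rw [← hst]; exact H t htI i
    have hval : m * ((z t i / t) * F i t (z t) * (∏ k, lam k ^ (-(A0 k))))
        = (m * z t i / s) * F i s (fun j => (∏ k, lam k ^ A k j) * z t j) := by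
      rw [hFeq, hcinv, ← hst]
      field_simp [hcne, htne t htI]
    rw [← hval]
    exact hder
end

section
/- Let Ā ∈ M_{r×(n+1)}(ℤ) and let V ∈ M_{n+1}(ℤ) be unimodular with ĀV = [I_r | 0]; write V = [V_𝔞 | V_𝔟] (first r and last n+1−r columns) and W = V⁻¹ = [W_𝔞 ; W_𝔟] (first r and last n+1−r rows). Let F̄ = (F̄_0, F̄_1,…,F̄_n) with F̄_0 ≡ 1 and each F̄_i a T_Ā-invariant rational function of (z_0,…,z_n). Let I be an open interval with 0 ∉ I and let z : I → (ℝ∖{0})^n be differentiable with dz_i/dt = (z_i(t)/t)·F̄_i(t, z(t)) for all t ∈ I and i ≥ 1. Set z̄(t) := (t, z(t)), x(t) := z̄(t)^{V_𝔞} ∈ (ℝ∖{0})^r, and y(t) := z̄(t)^{V_𝔟} ∈ (ℝ∖{0})^{n+1−r}. Then for all t ∈ I: dy_j/dt = (y_j(t)/t)·Σ_{i=0}^{n} F̄_i(y(t)^{W_𝔟})·(V_𝔟)_{i,j} for every j, and dx_k/dt = (x_k(t)/t)·Σ_{i=0}^{n} F̄_i(y(t)^{W_𝔟})·(V_𝔞)_{i,k}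 for every k. -/
/-!
Since `ĀV = [I | 0]` and `VW = 1`, we get `Ā = W_𝔞`, hence every point factors as
`z̄ = (z̄^{V_𝔞})^{Ā} * (z̄^{V_𝔟})^{W_𝔟} = x^{Ā} * y^{W_𝔟}`, and `T_Ā`-invariance gives
`F̄_i(z̄) = F̄_i(y^{W_𝔟})`. The rest is the logarithmic derivative of a monomial:
`(z̄^c)' / z̄^c = Σ_i c_i z̄_i' / z̄_i = (1/t) Σ_i c_i F̄_i(z̄)`.
-/

/-- For a vector `x` of real numbers and an integer matrix `A`, `mpow x A` is the vector
whose `j`-th entry is `∏ i, x i ^ A i j` (integer powers). -/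
noncomputable def mpow {ι κ : Type*} [Fintype ι] (x : ι → ℝ) (A : Matrix ι κ ℤ) : κ → ℝ :=
  fun j => ∏ i, x i ^ A i j

open Matrix

theorem zpow_finset_sum₀ {α G₀ : Type*} [CommGroupWithZero G₀] {x : G₀} (hx : x ≠ 0)
    (s : Finset α) (f : α → ℤ) :
    x ^ (∑ i ∈ s, f i) = ∏ i ∈ s, x ^ f i := by
  classical
  induction s using Finset.cons_induction with
  | empty => simp
  | cons a s ha ih => rw [Finset.sum_cons, Finset.prod_cons, zpow_add₀ hx, ih]

section mpow

variable {ι κ μ : Type*} [Fintype ι]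

theorem mpow_ne_zero {x : ι → ℝ} (hx : ∀ i, x i ≠ 0) (A : Matrix ι κ ℤ) (j : κ) :
    mpow x A j ≠ 0 :=
  Finset.prod_ne_zero_iff.mpr fun i _ => zpow_ne_zero _ (hx i)

theorem mpow_mul [Fintype κ] {x : ι → ℝ} (hx : ∀ i, x i ≠ 0) (A : Matrix ι κ ℤ)
    (B : Matrix κ μ ℤ) : mpow x (A * B) = mpow (mpow x A) B := by
  funext j
  calc ∏ i, x i ^ (∑ k, A i k * B k j)
      = ∏ i, ∏ k, (x i ^ A i k) ^ B k j := by
        refine Finset.prod_congr rfl fun i _ => ?_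
        rw [zpow_finset_sum₀ (hx i)]
        exact Finset.prod_congr rfl fun k _ => zpow_mul _ _ _
    _ = ∏ k, (∏ i, x i ^ A i k) ^ B k j := by
        rw [Finset.prod_comm]
        exact Finset.prod_congr rfl fun k _ => Finset.prod_zpow _ _ _

theorem mpow_one [DecidableEq ι] (x : ι → ℝ) : mpow x (1 : Matrix ι ι ℤ) = x := by
  funext j
  rw [mpow, Finset.prod_eq_single j (fun i _ hij => by simp [one_apply_ne hij]) (by simp)]
  simp

theorem mpow_sum_type [Fintype κ] (y : ι ⊕ κ → ℝ) (W : Matrix (ι ⊕ κ) μ ℤ) (l : μ) :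
    mpow y W l =
      mpow (y ∘ Sum.inl) (W.submatrix Sum.inl id) l *
        mpow (y ∘ Sum.inr) (W.submatrix Sum.inr id) l :=
  Fintype.prod_sum_type _

theorem hasDerivAt_mpow {u : ℝ → ι → ℝ} {a : ι → ℝ} {t : ℝ} (hu : ∀ i, u t i ≠ 0)
    (hderiv : ∀ i, HasDerivAt (fun s => u s i) (u t i * a i) t) (A : Matrix ι κ ℤ) (j : κ) :
    HasDerivAt (fun s => mpow (u s) A j) (mpow (u t) A j * ∑ i, a i * A i j) t := by
  classical
  have hfactor : ∀ i, HasDerivAt (fun s => u s i ^ A i j)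
      (A i j * u t i ^ (A i j - 1) * (u t i * a i)) t := fun i =>
    (hasDerivAt_zpow (A i j) (u t i) (Or.inl (hu i))).comp (h := fun s => u s i) t (hderiv i)
  refine (HasDerivAt.fun_finsetProd fun i _ => hfactor i).congr_deriv ?_
  rw [mpow, Finset.mul_sum]
  refine Finset.sum_congr rfl fun i _ => ?_
  rw [smul_eq_mul, ← Finset.prod_erase_mul _ _ (Finset.mem_univ i),
    ← sub_add_cancel (A i j) 1, zpow_add_one₀ (hu i), sub_add_cancel]
  ring

end mpow

theorem eq_submatrix_inl_of_mul_eq_fromCols {ι κ μ : Type*} [Fintype ι] [Fintype κ] [Fintype μ]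
    [DecidableEq ι] [DecidableEq κ] {A : Matrix κ ι ℤ} {V : Matrix ι (κ ⊕ μ) ℤ}
    {W : Matrix (κ ⊕ μ) ι ℤ} (hVW : V * W = 1) (hAV : A * V = fromCols 1 0) :
    A = W.submatrix Sum.inl id := by
  have hA : A = (fromCols 1 0 : Matrix κ (κ ⊕ μ) ℤ) * W := by
    rw [← hAV, Matrix.mul_assoc, hVW, Matrix.mul_one]
  ext k l
  simp [hA, mul_apply, Fintype.sum_sum_type, one_apply]

theorem apply_eq_apply_mpow_of_invariant {ι κ μ : Type*} [Fintype ι] [Fintype κ] [Fintype μ]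
    [DecidableEq ι] [DecidableEq κ] {A : Matrix κ ι ℤ} {V : Matrix ι (κ ⊕ μ) ℤ}
    {W : Matrix (κ ⊕ μ) ι ℤ} (hVW : V * W = 1) (hAV : A * V = fromCols 1 0)
    {f : (ι → ℝ) → ℝ}
    (hf : ∀ lam : κ → ℝ, (∀ k, lam k ≠ 0) → ∀ zz : ι → ℝ, (∀ l, zz l ≠ 0) →
      f (fun l => mpow lam A l * zz l) = f zz)
    {x : ι → ℝ} (hx : ∀ i, x i ≠ 0) :
    f x = f (mpow (mpow x (V.submatrix id Sum.inr)) (W.submatrix Sum.inr id)) := by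
  have hfactor : x = fun l => mpow (mpow x (V.submatrix id Sum.inl)) A l *
      mpow (mpow x (V.submatrix id Sum.inr)) (W.submatrix Sum.inr id) l := by
    funext l
    rw [eq_submatrix_inl_of_mul_eq_fromCols hVW hAV]
    conv_lhs => rw [← mpow_one x, ← hVW, mpow_mul hx, mpow_sum_type]
    rfl
  conv_lhs => rw [hfactor]
  exact hf _ (mpow_ne_zero hx _) _ (mpow_ne_zero (mpow_ne_zero hx _) _)

theorem hasDerivAt_cons_of_hasDerivAt {n : ℕ} {z : ℝ → Fin n → ℝ}
    {F : Fin n → (Fin (n + 1) → ℝ) → ℝ} {t : ℝ} (ht : t ≠ 0)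
    (hode : ∀ i, HasDerivAt (fun s => z s i) ((z t i / t) * F i (Fin.cons t (z t))) t)
    (i : Fin (n + 1)) :
    HasDerivAt (fun s => (Fin.cons s (z s) : Fin (n + 1) → ℝ) i)
      ((Fin.cons t (z t) : Fin (n + 1) → ℝ) i / t *
        (Fin.cons (fun _ => (1 : ℝ)) F : Fin (n + 1) → (Fin (n + 1) → ℝ) → ℝ) i
          (Fin.cons t (z t))) t := by
  induction i using Fin.cases with
  | zero => simpa [div_self ht] using hasDerivAt_id' t
  | succ i => simpa using hode i

theorem reduced_system_solves_general (n r p : ℕ)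
    (Abar : Matrix (Fin r) (Fin (n + 1)) ℤ)
    (V : Matrix (Fin (n + 1)) (Fin r ⊕ Fin p) ℤ)
    (W : Matrix (Fin r ⊕ Fin p) (Fin (n + 1)) ℤ)
    (hVW : V * W = 1)
    (hAV : Abar * V = Matrix.fromCols 1 0)
    (F : Fin n → (Fin (n + 1) → ℝ) → ℝ)
    (hinv : ∀ (i : Fin n) (lam : Fin r → ℝ), (∀ k, lam k ≠ 0) →
      ∀ zz : Fin (n + 1) → ℝ, (∀ l, zz l ≠ 0) →
        F i (fun l => mpow lam Abar l * zz l) = F i zz)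
    (I : Set ℝ) (h0I : (0 : ℝ) ∉ I)
    (z : ℝ → Fin n → ℝ) (hznz : ∀ t ∈ I, ∀ i, z t i ≠ 0)
    (hode : ∀ t ∈ I, ∀ i, HasDerivAt (fun s => z s i)
        ((z t i / t) * F i (Fin.cons t (z t))) t) :
    ∀ t ∈ I,
      (∀ j : Fin p,
        HasDerivAt
          (fun s => mpow (Fin.cons s (z s) : Fin (n + 1) → ℝ) (V.submatrix id Sum.inr) j)
          ((mpow (Fin.cons t (z t) : Fin (n + 1) → ℝ) (V.submatrix id Sum.inr) j / t) *
            ∑ i : Fin (n + 1),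
              (Fin.cons (fun _ => (1 : ℝ)) F : Fin (n + 1) → (Fin (n + 1) → ℝ) → ℝ) i
                  (mpow (mpow (Fin.cons t (z t) : Fin (n + 1) → ℝ)
                      (V.submatrix id Sum.inr)) (W.submatrix Sum.inr id)) *
                (V i (Sum.inr j) : ℝ)) t) ∧
      (∀ k : Fin r,
        HasDerivAt
          (fun s => mpow (Fin.cons s (z s) : Fin (n + 1) → ℝ) (V.submatrix id Sum.inl) k)
          ((mpow (Fin.cons t (z t) : Fin (n + 1) → ℝ) (V.submatrix id Sum.inl) k / t) *
            ∑ i : Fin (n + 1),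
              (Fin.cons (fun _ => (1 : ℝ)) F : Fin (n + 1) → (Fin (n + 1) → ℝ) → ℝ) i
                  (mpow (mpow (Fin.cons t (z t) : Fin (n + 1) → ℝ)
                      (V.submatrix id Sum.inr)) (W.submatrix Sum.inr id)) *
                (V i (Sum.inl k) : ℝ)) t) := by
  intro t htI
  set zb : Fin (n + 1) → ℝ := Fin.cons t (z t)
  set Fb : Fin (n + 1) → (Fin (n + 1) → ℝ) → ℝ := Fin.cons (fun _ => 1) F
  set w := mpow (mpow zb (V.submatrix id Sum.inr)) (W.submatrix Sum.inr id)
  have ht : t ≠ 0 := ne_of_mem_of_not_mem htI h0I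
  have hzb : ∀ i, zb i ≠ 0 := Fin.cases ht (hznz t htI)
  have hFb : ∀ i, Fb i zb = Fb i w :=
    Fin.cases rfl fun i => apply_eq_apply_mpow_of_invariant hVW hAV (hinv i) hzb
  have hcol : ∀ c, HasDerivAt (fun s => mpow (Fin.cons s (z s) : Fin (n + 1) → ℝ) V c)
      (mpow zb V c / t * ∑ i, Fb i w * V i c) t := by
    intro c
    have hzb' : ∀ i, HasDerivAt (fun s => (Fin.cons s (z s) : Fin (n + 1) → ℝ) i)
        (zb i * (Fb i zb / t)) t := fun i =>
      (hasDerivAt_cons_of_hasDerivAt ht (hode t htI) i).congr_deriv (by ring)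
    refine (hasDerivAt_mpow hzb hzb' V c).congr_deriv ?_
    simp only [hFb, div_mul_eq_mul_div, ← Finset.sum_div]
    ring
  exact ⟨fun j => hcol (Sum.inr j), fun k => hcol (Sum.inl k)⟩

/-- Hubert–Labahn, Theorem 6.5(1).  Let `Ā ∈ M_{r×(n+1)}(ℤ)` and let `V`
be unimodular with `ĀV = [I_r | 0]`, `V = [V_𝔞 | V_𝔟]`, `W = V⁻¹ = [W_𝔞 ; W_𝔟]`.  If
`F̄ = (1, F₁, …, F_n)` consists of `T_Ā`-invariant functions and `z` solves
`dz_i/dt = (z_i/t)·F̄_i(t, z(t))` with nonvanishing components, then with `z̄ = (t, z)`,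
`x = z̄^{V_𝔞}`, `y = z̄^{V_𝔟}` one has
`dy_j/dt = (y_j/t)·Σ_i F̄_i(y^{W_𝔟})·(V_𝔟)_{i,j}` and
`dx_k/dt = (x_k/t)·Σ_i F̄_i(y^{W_𝔟})·(V_𝔞)_{i,k}`. -/
theorem reduced_system_solves (n r p : ℕ) (hn : n + 1 = r + p)
    (Abar : Matrix (Fin r) (Fin (n + 1)) ℤ)
    (V : Matrix (Fin (n + 1)) (Fin r ⊕ Fin p) ℤ)
    (W : Matrix (Fin r ⊕ Fin p) (Fin (n + 1)) ℤ)
    (hVW : V * W = 1) (hWV : W * V = 1)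
    (hAV : Abar * V = Matrix.fromCols 1 0)
    (F : Fin n → (Fin (n + 1) → ℝ) → ℝ)
    (hinv : ∀ (i : Fin n) (lam : Fin r → ℝ), (∀ k, lam k ≠ 0) →
      ∀ zz : Fin (n + 1) → ℝ, (∀ l, zz l ≠ 0) →
        F i (fun l => mpow lam Abar l * zz l) = F i zz)
    (I : Set ℝ) (hIopen : IsOpen I) (hIconv : Convex ℝ I) (h0I : (0 : ℝ) ∉ I)
    (z : ℝ → Fin n → ℝ) (hznz : ∀ t ∈ I, ∀ i, z t i ≠ 0)
    (hode : ∀ t ∈ I, ∀ i, HasDerivAt (fun s => z s i)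
        ((z t i / t) * F i (Fin.cons t (z t))) t) :
    ∀ t ∈ I,
      (∀ j : Fin p,
        HasDerivAt
          (fun s => mpow (Fin.cons s (z s) : Fin (n + 1) → ℝ) (V.submatrix id Sum.inr) j)
          ((mpow (Fin.cons t (z t) : Fin (n + 1) → ℝ) (V.submatrix id Sum.inr) j / t) *
            ∑ i : Fin (n + 1),
              (Fin.cons (fun _ => (1 : ℝ)) F : Fin (n + 1) → (Fin (n + 1) → ℝ) → ℝ) i
                  (mpow (mpow (Fin.cons t (z t) : Fin (n + 1) → ℝ)
                      (V.submatrix id Sum.inr)) (W.submatrix Sum.inr id)) *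
                (V i (Sum.inr j) : ℝ)) t) ∧
      (∀ k : Fin r,
        HasDerivAt
          (fun s => mpow (Fin.cons s (z s) : Fin (n + 1) → ℝ) (V.submatrix id Sum.inl) k)
          ((mpow (Fin.cons t (z t) : Fin (n + 1) → ℝ) (V.submatrix id Sum.inl) k / t) *
            ∑ i : Fin (n + 1),
              (Fin.cons (fun _ => (1 : ℝ)) F : Fin (n + 1) → (Fin (n + 1) → ℝ) → ℝ) i
                  (mpow (mpow (Fin.cons t (z t) : Fin (n + 1) → ℝ)
                      (V.submatrix id Sum.inr)) (W.submatrix Sum.inr id)) *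
                (V i (Sum.inl k) : ℝ)) t) :=
  reduced_system_solves_general n r p Abar V W hVW hAV F hinv I h0I z hznz hode
end

section
/- Consider a parametrized ODE system dz/dt = (z/t) * F(t, z, c) with q dependent variables z = (z_1,…,z_q), p nonzero real constant parameters c = (c_1,…,c_p), and m = 1+q+p total quantities ordered (t, z, c), where each component F_i is a rational function. Let A ∈ M_{r×m}(ℤ) be such that each F_i is T_A-invariant, and suppose there is a unimodular V ∈ M_m(ℤ) with AV = [I_r | 0] having the block form V = [[0, I_{q+1}, 0], [V_𝔞, V_v̄, V_c]], where the top q+1 rows correspond to (t,z) and the bottom p rows correspond to c, and V_v̄ = [V_t | V_z] with first column V_t. Let W = V⁻¹ and let its bottom p rows be [W_t | W_z | W_c] (first column W_t, next q columns W_z, last p columns W_c). Define the invariants τ := (c^{V_t})·t, ν := c^{V_z} * z, and κ := c^{V_c}. Then for every solution z(t) of the system with nonvanishing components on an open interval not containing 0, the curve ν regarded as a function of τ satisfies dν/dτ = (ν/τ) * F(κ^{W_t}·τ, κ^{W_z} * ν, κ^{W_c}). -/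
/-!
Write `W'` for the bottom `p'` rows of `W`. Since `A = A V W = [I | 0] W`, the first `r` rows of
`W` are `A`, and the top block row of `V W = 1` makes the next `q + 1` rows `[I | 0]`; the bottom
block row then reads `V_c W' = [0 | I] - V_v̄ [I | 0] - V_𝔞 A`. Exponentiating `c`, this says
`κ^{W'} = (c^{-V_v̄}, c) * λ^A` with `λ = c^{-V_𝔞}`, so `(κ^{W_t} τ, κ^{W_z} * ν, κ^{W_c})` is the
image of `(t, z, c)` under the scaling by `λ`, which leaves `F` unchanged. The rest is the chain
rule for `ν(τ) = c^{V_z} * z(τ / c^{V_t})`.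
-/

theorem zpow_sum₀ {G₀ ι : Type*} [CommGroupWithZero G₀] {a : G₀} (ha : a ≠ 0)
    (s : Finset ι) (e : ι → ℤ) : a ^ ∑ i ∈ s, e i = ∏ i ∈ s, a ^ e i := by
  induction s using Finset.cons_induction with
  | empty => simp
  | cons i s hi ih => rw [Finset.sum_cons, Finset.prod_cons, zpow_add₀ ha, ih]

section Monomials

variable {G₀ ι κ μ : Type*} [CommGroupWithZero G₀] [Fintype ι]

/-- The paper's `x^M`. -/
def monomials (x : ι → G₀) (M : Matrix ι κ ℤ) : κ → G₀ := fun j => ∏ i, x i ^ M i j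

variable {x : ι → G₀}

theorem monomials_ne_zero (hx : ∀ i, x i ≠ 0) (M : Matrix ι κ ℤ) (j : κ) :
    monomials x M j ≠ 0 :=
  Finset.prod_ne_zero_iff.mpr fun i _ => zpow_ne_zero _ (hx i)

@[simp]
theorem monomials_zero : monomials x (0 : Matrix ι κ ℤ) = 1 := by
  ext j; simp [monomials]

@[simp]
theorem monomials_one [DecidableEq ι] : monomials x (1 : Matrix ι ι ℤ) = x := by
  ext j; simp [monomials, Matrix.one_apply]

@[simp]
theorem monomials_fromCols {ν : Type*} (M : Matrix ι κ ℤ) (N : Matrix ι ν ℤ) :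
    monomials x (Matrix.fromCols M N) = Sum.elim (monomials x M) (monomials x N) := by
  ext (j | j) <;> rfl

theorem monomials_inv (M : Matrix ι κ ℤ) : monomials x⁻¹ M = (monomials x M)⁻¹ := by
  ext j; simp [monomials]

theorem monomials_sub (hx : ∀ i, x i ≠ 0) (M N : Matrix ι κ ℤ) :
    monomials x (M - N) = monomials x M / monomials x N := by
  ext j; simp [monomials, zpow_sub₀ (hx _), Finset.prod_div_distrib]

theorem monomials_monomials [Fintype κ] (hx : ∀ i, x i ≠ 0) (M : Matrix ι κ ℤ)
    (N : Matrix κ μ ℤ) : monomials (monomials x M) N = monomials x (M * N) := by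
  ext j
  simp only [monomials, Matrix.mul_apply, zpow_sum₀ (hx _), ← Finset.prod_zpow, zpow_mul]
  exact Finset.prod_comm

end Monomials

namespace Matrix

variable {R m n m₁ m₂ : Type*}

theorem fromCols_one_zero_mul [Semiring R] [Fintype m₁] [Fintype m₂] [DecidableEq m₁]
    (W : Matrix (m₁ ⊕ m₂) n R) :
    (fromCols 1 0 : Matrix m₁ (m₁ ⊕ m₂) R) * W = W.toRows₁ := by
  rw [← fromRows_toRows W, fromCols_mul_fromRows, toRows₁_fromRows]; simp

theorem toRows₁_one [Zero R] [One R] [DecidableEq m₁] [DecidableEq m₂] :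
    (1 : Matrix (m₁ ⊕ m₂) (m₁ ⊕ m₂) R).toRows₁ = fromCols 1 0 := by
  ext i (j | j) <;> simp [one_apply]

theorem toRows₂_one [Zero R] [One R] [DecidableEq m₁] [DecidableEq m₂] :
    (1 : Matrix (m₁ ⊕ m₂) (m₁ ⊕ m₂) R).toRows₂ = fromCols 0 1 := by
  ext i (j | j) <;> simp [one_apply]

theorem toRows₁_mul [Mul R] [AddCommMonoid R] [Fintype n] (A : Matrix (m₁ ⊕ m₂) n R)
    (B : Matrix n m R) : (A * B).toRows₁ = A.toRows₁ * B := rfl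

theorem toRows₂_mul [Mul R] [AddCommMonoid R] [Fintype n] (A : Matrix (m₁ ⊕ m₂) n R)
    (B : Matrix n m R) : (A * B).toRows₂ = A.toRows₂ * B := rfl

theorem toRows₁_eq_of_mul_eq_fromCols_one_zero [Semiring R] {k l : Type*} [Fintype k]
    [Fintype l] [Fintype m] [DecidableEq k] [DecidableEq m] {A : Matrix k m R}
    {V : Matrix m (k ⊕ l) R} {W : Matrix (k ⊕ l) m R} (hVW : V * W = 1)
    (hAV : A * V = fromCols 1 0) : W.toRows₁ = A := by
  rw [← fromCols_one_zero_mul, ← hAV, Matrix.mul_assoc, hVW, Matrix.mul_one]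

theorem toCols₂_toCols₂_mul_eq_of_mul_eq_one [Ring R] {k : Type*} [Fintype k] [Fintype m₁]
    [Fintype m₂] [Fintype n] [DecidableEq k] [DecidableEq m₁] [DecidableEq m₂]
    {A : Matrix k (m₁ ⊕ m₂) R}
    {V : Matrix (m₁ ⊕ m₂) (k ⊕ (m₁ ⊕ n)) R} {W : Matrix (k ⊕ (m₁ ⊕ n)) (m₁ ⊕ m₂) R}
    (hVW : V * W = 1) (hAV : A * V = fromCols 1 0)
    (hVtop : V.toRows₁ = fromCols 0 (fromCols 1 0)) :
    V.toRows₂.toCols₂.toCols₂ * W.toRows₂.toRows₂ =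
      fromCols 0 1 - V.toRows₂.toCols₂.toCols₁ * (fromCols 1 0 : Matrix m₁ (m₁ ⊕ m₂) R) -
        V.toRows₂.toCols₁ * A := by
  have hW₁ := toRows₁_eq_of_mul_eq_fromCols_one_zero hVW hAV
  have hblocks : W = fromRows A (fromRows W.toRows₂.toRows₁ W.toRows₂.toRows₂) := by
    rw [fromRows_toRows, ← hW₁, fromRows_toRows]
  have hW₂ : W.toRows₂.toRows₁ = fromCols 1 0 := by
    have htop := congrArg toRows₁ hVW
    rw [toRows₁_mul, toRows₁_one, hVtop, hblocks] at htop
    simpa [fromCols_mul_fromRows, fromCols_one_zero_mul] using htop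
  have hbot := congrArg toRows₂ hVW
  rw [toRows₂_mul, toRows₂_one, ← fromCols_toCols V.toRows₂, ← fromCols_toCols V.toRows₂.toCols₂,
    hblocks, fromCols_mul_fromRows, fromCols_mul_fromRows, hW₂] at hbot
  rw [← hbot]
  abel

end Matrix

theorem monomials_monomials_toRows₂_eq {G₀ k m₁ m₂ n : Type*} [CommGroupWithZero G₀] [Fintype k]
    [Fintype m₁] [Fintype m₂] [Fintype n] [DecidableEq k] [DecidableEq m₁] [DecidableEq m₂]
    {A : Matrix k (m₁ ⊕ m₂) ℤ} {V : Matrix (m₁ ⊕ m₂) (k ⊕ (m₁ ⊕ n)) ℤ}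
    {W : Matrix (k ⊕ (m₁ ⊕ n)) (m₁ ⊕ m₂) ℤ} (hVW : V * W = 1) (hAV : A * V = Matrix.fromCols 1 0)
    (hVtop : V.toRows₁ = Matrix.fromCols 0 (Matrix.fromCols 1 0)) {c : m₂ → G₀}
    (hc : ∀ i, c i ≠ 0) :
    monomials (monomials c V.toRows₂.toCols₂.toCols₂) W.toRows₂.toRows₂ =
      Sum.elim (monomials c V.toRows₂.toCols₂.toCols₁)⁻¹ c *
        monomials (monomials c V.toRows₂.toCols₁)⁻¹ A := by
  rw [monomials_monomials hc, Matrix.toCols₂_toCols₂_mul_eq_of_mul_eq_one hVW hAV hVtop,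
    monomials_sub hc, monomials_sub hc, ← monomials_monomials hc, ← monomials_monomials hc,
    monomials_inv]
  ext (i | i) <;> simp [div_eq_mul_inv]

theorem HasDerivAt.const_mul_comp_div_const {f : ℝ → ℝ} {g μ s : ℝ}
    (hf : HasDerivAt f (f (s / μ) / (s / μ) * g) (s / μ)) (ν : ℝ) (hμ : μ ≠ 0) :
    HasDerivAt (fun s' => ν * f (s' / μ)) (ν * f (s / μ) / s * g) s := by
  refine ((hf.comp s ((hasDerivAt_id s).div_const μ)).const_mul ν).congr_deriv ?_
  rw [div_div_eq_mul_div]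
  field_simp

theorem nondimensionalized_system_general (q p r p' : ℕ)
    (F : Fin q → ℝ → (Fin q → ℝ) → (Fin p → ℝ) → ℝ)
    (A : Matrix (Fin r) (Fin (q + 1) ⊕ Fin p) ℤ)
    (V : Matrix (Fin (q + 1) ⊕ Fin p) (Fin r ⊕ (Fin (q + 1) ⊕ Fin p')) ℤ)
    (W : Matrix (Fin r ⊕ (Fin (q + 1) ⊕ Fin p')) (Fin (q + 1) ⊕ Fin p) ℤ)
    (hVW : V * W = 1)
    (hAV : A * V = Matrix.fromCols 1 0)
    (hV11 : ∀ (a : Fin (q + 1)) (k : Fin r), V (Sum.inl a) (Sum.inl k) = 0)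
    (hV12 : ∀ a b : Fin (q + 1), V (Sum.inl a) (Sum.inr (Sum.inl b)) = if a = b then 1 else 0)
    (hV13 : ∀ (a : Fin (q + 1)) (j : Fin p'), V (Sum.inl a) (Sum.inr (Sum.inr j)) = 0)
    (hinv : ∀ (a : Fin q) (lam : Fin r → ℝ), (∀ k, lam k ≠ 0) →
      ∀ (t : ℝ) (zz : Fin q → ℝ) (cc : Fin p → ℝ),
        t ≠ 0 → (∀ a', zz a' ≠ 0) → (∀ b, cc b ≠ 0) →
        F a ((∏ k, lam k ^ A k (Sum.inl 0)) * t)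
          (fun a' => (∏ k, lam k ^ A k (Sum.inl a'.succ)) * zz a')
          (fun b => (∏ k, lam k ^ A k (Sum.inr b)) * cc b) = F a t zz cc)
    (c : Fin p → ℝ) (hc : ∀ b, c b ≠ 0)
    (I : Set ℝ) (h0I : (0 : ℝ) ∉ I)
    (z : ℝ → Fin q → ℝ) (hznz : ∀ t ∈ I, ∀ a, z t a ≠ 0)
    (hode : ∀ t ∈ I, ∀ a : Fin q,
      HasDerivAt (fun s => z s a) ((z t a / t) * F a t (z t) c) t) :
    -- ν, viewed as a function of the rescaled time τ = (c^{V_t})·t, solves the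
    -- reduced (nondimensionalized) system.
    ∀ s : ℝ, s / (∏ b, c b ^ V (Sum.inr b) (Sum.inr (Sum.inl 0))) ∈ I → ∀ a : Fin q,
      HasDerivAt
        (fun s' => (∏ b, c b ^ V (Sum.inr b) (Sum.inr (Sum.inl a.succ))) *
          z (s' / (∏ b, c b ^ V (Sum.inr b) (Sum.inr (Sum.inl 0)))) a)
        ((((∏ b, c b ^ V (Sum.inr b) (Sum.inr (Sum.inl a.succ))) *
              z (s / (∏ b, c b ^ V (Sum.inr b) (Sum.inr (Sum.inl 0)))) a) / s) *
          F a
            ((∏ j, (∏ b, c b ^ V (Sum.inr b) (Sum.inr (Sum.inr j))) ^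
                W (Sum.inr (Sum.inr j)) (Sum.inl 0)) * s)
            (fun a' =>
              (∏ j, (∏ b, c b ^ V (Sum.inr b) (Sum.inr (Sum.inr j))) ^
                  W (Sum.inr (Sum.inr j)) (Sum.inl a'.succ)) *
                ((∏ b, c b ^ V (Sum.inr b) (Sum.inr (Sum.inl a'.succ))) *
                  z (s / (∏ b, c b ^ V (Sum.inr b) (Sum.inr (Sum.inl 0)))) a'))
            (fun b =>
              ∏ j, (∏ b', c b' ^ V (Sum.inr b') (Sum.inr (Sum.inr j))) ^
                W (Sum.inr (Sum.inr j)) (Sum.inr b))) s := by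
  have hVtop : V.toRows₁ = Matrix.fromCols 0 (Matrix.fromCols 1 0) := by
    ext a (k | b | j) <;> simp [hV11, hV12, hV13, Matrix.one_apply]
  set lam := (monomials c V.toRows₂.toCols₁)⁻¹
  have hlam : ∀ k, lam k ≠ 0 := fun k => inv_ne_zero (monomials_ne_zero hc _ k)
  have hκ : ∀ i, ∏ j, (∏ b, c b ^ V (Sum.inr b) (Sum.inr (Sum.inr j))) ^ W (Sum.inr (Sum.inr j)) i =
      Sum.elim (fun a => (∏ b, c b ^ V (Sum.inr b) (Sum.inr (Sum.inl a)))⁻¹) c i *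
        ∏ k, lam k ^ A k i :=
    congrFun (monomials_monomials_toRows₂_eq hVW hAV hVtop hc)
  have hν : ∀ a, ∏ b, c b ^ V (Sum.inr b) (Sum.inr (Sum.inl a)) ≠ 0 := monomials_ne_zero hc _
  intro s hs a
  simp only [hκ, Sum.elim_inl, Sum.elim_inr]
  convert (hode _ hs a).const_mul_comp_div_const _ (hν 0) using 2
  rw [← hinv a lam hlam _ _ c (ne_of_mem_of_not_mem hs h0I) (hznz _ hs) hc]
  congr 1
  · field_simp [hν 0]
  · ext a'
    field_simp [hν a'.succ]
  · ext b
    ring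

/-- Hubert–Labahn, Theorem 7.1.  For the parametrized system
`dz/dt = (z/t) * F(t, z, c)` with `q` dependent variables, `p` nonzero constants `c`,
order `(t, z, c)`, scaling matrix `A ∈ M_{r×m}(ℤ)` fixing each `F_i`, and a unimodular
Hermite multiplier `V` with `AV = [I_r | 0]` of the block form
`V = [[0, I_{q+1}, 0], [V_𝔞, V_v̄, V_c]]` (with `V_v̄ = [V_t | V_z]`, `W = V⁻¹` with bottom
rows `[W_t | W_z | W_c]`), the invariants `τ = c^{V_t}·t`, `ν = c^{V_z} * z`, `κ = c^{V_c}`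
satisfy the reduced system `dν/dτ = (ν/τ) * F(κ^{W_t}·τ, κ^{W_z} * ν, κ^{W_c})`. -/
theorem nondimensionalized_system (q p r p' : ℕ) (hp : p = r + p')
    (F : Fin q → ℝ → (Fin q → ℝ) → (Fin p → ℝ) → ℝ)
    (A : Matrix (Fin r) (Fin (q + 1) ⊕ Fin p) ℤ)
    (V : Matrix (Fin (q + 1) ⊕ Fin p) (Fin r ⊕ (Fin (q + 1) ⊕ Fin p')) ℤ)
    (W : Matrix (Fin r ⊕ (Fin (q + 1) ⊕ Fin p')) (Fin (q + 1) ⊕ Fin p) ℤ)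
    (hVW : V * W = 1) (hWV : W * V = 1)
    (hAV : A * V = Matrix.fromCols 1 0)
    (hV11 : ∀ (a : Fin (q + 1)) (k : Fin r), V (Sum.inl a) (Sum.inl k) = 0)
    (hV12 : ∀ a b : Fin (q + 1), V (Sum.inl a) (Sum.inr (Sum.inl b)) = if a = b then 1 else 0)
    (hV13 : ∀ (a : Fin (q + 1)) (j : Fin p'), V (Sum.inl a) (Sum.inr (Sum.inr j)) = 0)
    (hinv : ∀ (a : Fin q) (lam : Fin r → ℝ), (∀ k, lam k ≠ 0) →
      ∀ (t : ℝ) (zz : Fin q → ℝ) (cc : Fin p → ℝ),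
        t ≠ 0 → (∀ a', zz a' ≠ 0) → (∀ b, cc b ≠ 0) →
        F a ((∏ k, lam k ^ A k (Sum.inl 0)) * t)
          (fun a' => (∏ k, lam k ^ A k (Sum.inl a'.succ)) * zz a')
          (fun b => (∏ k, lam k ^ A k (Sum.inr b)) * cc b) = F a t zz cc)
    (c : Fin p → ℝ) (hc : ∀ b, c b ≠ 0)
    (I : Set ℝ) (hIopen : IsOpen I) (hIconv : Convex ℝ I) (h0I : (0 : ℝ) ∉ I)
    (z : ℝ → Fin q → ℝ) (hznz : ∀ t ∈ I, ∀ a, z t a ≠ 0)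
    (hode : ∀ t ∈ I, ∀ a : Fin q,
      HasDerivAt (fun s => z s a) ((z t a / t) * F a t (z t) c) t) :
    -- ν, viewed as a function of the rescaled time τ = (c^{V_t})·t, solves the
    -- reduced (nondimensionalized) system.
    ∀ s : ℝ, s / (∏ b, c b ^ V (Sum.inr b) (Sum.inr (Sum.inl 0))) ∈ I → ∀ a : Fin q,
      HasDerivAt
        (fun s' => (∏ b, c b ^ V (Sum.inr b) (Sum.inr (Sum.inl a.succ))) *
          z (s' / (∏ b, c b ^ V (Sum.inr b) (Sum.inr (Sum.inl 0)))) a)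
        ((((∏ b, c b ^ V (Sum.inr b) (Sum.inr (Sum.inl a.succ))) *
              z (s / (∏ b, c b ^ V (Sum.inr b) (Sum.inr (Sum.inl 0)))) a) / s) *
          F a
            ((∏ j, (∏ b, c b ^ V (Sum.inr b) (Sum.inr (Sum.inr j))) ^
                W (Sum.inr (Sum.inr j)) (Sum.inl 0)) * s)
            (fun a' =>
              (∏ j, (∏ b, c b ^ V (Sum.inr b) (Sum.inr (Sum.inr j))) ^
                  W (Sum.inr (Sum.inr j)) (Sum.inl a'.succ)) *
                ((∏ b, c b ^ V (Sum.inr b) (Sum.inr (Sum.inl a'.succ))) *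
                  z (s / (∏ b, c b ^ V (Sum.inr b) (Sum.inr (Sum.inl 0)))) a'))
            (fun b =>
              ∏ j, (∏ b', c b' ^ V (Sum.inr b') (Sum.inr (Sum.inr j))) ^
                W (Sum.inr (Sum.inr j)) (Sum.inr b))) s :=
  nondimensionalized_system_general q p r p' F A V W hVW hAV hV11 hV12 hV13 hinv c hc I h0I z hznz
    hode
end

section
/- Let A ∈ M_{r×m}(ℤ) have rank r, let V ∈ M_m(ℤ) be a Hermite multiplier of A with W = V⁻¹, partitioned V = [V_𝔞 | V_𝔟] and W = [W_𝔞 ; W_𝔟], and let P ∈ M_{m×s}(ℤ) satisfy A·P = 0 (with s ≤ m−r). Then the following are equivalent: (i) there exist a matrix E ∈ M_{m×(m−r−s)}(ℤ) and a unimodular matrix C ∈ M_{m−r}(ℤ) such that V_𝔟·C = [P | E]; (ii) the matrix W_𝔟·P ∈ M_{(m−r)×s}(ℤ) can be extended to a unimodular matrix, i.e. there exists Ẽ ∈ M_{(m−r)×(m−r−s)}(ℤ) such that [W_𝔟·P | Ẽ] is unimodular. -/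
/-!
Write `A * V = [H | 0]`. From `V * W = 1` we get `A = H * W_a`, so `H` has full rank and
`A * P = 0` forces `W_a * P = 0`; hence `V_b * (W_b * P) = P`, while `W * V = 1` gives
`W_b * V_b = 1`. Left multiplication by `W_b` turns `V_b * C = [P | E]` into
`C = [W_b * P | W_b * E]`, and left multiplication by `V_b` goes back.
-/

open Matrix

namespace Matrix

variable {R : Type*} [CommRing R] {n m a b p : Type*}

theorem mul_eq_add_submatrix_inl_inr [Fintype a] [Fintype b]
    (V : Matrix n (a ⊕ b) R) (W : Matrix (a ⊕ b) m R) :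
    V * W = V.submatrix id Sum.inl * W.submatrix Sum.inl id
      + V.submatrix id Sum.inr * W.submatrix Sum.inr id := by
  ext i j
  simp [mul_apply, Fintype.sum_sum_type]

theorem isUnit_of_rank_eq_card {K : Type*} [Field K] [Fintype m] [DecidableEq m]
    {M : Matrix m m K} (h : M.rank = Fintype.card m) : IsUnit M := by
  rw [← mulVec_surjective_iff_isUnit, ← coe_mulVecLin, ← LinearMap.range_eq_top]
  exact Submodule.eq_top_of_finrank_eq (h.trans (Module.finrank_fintype_fun_eq_card K).symm)

theorem submatrix_inr_mul_submatrix_inr_eq_one [Fintype m] [DecidableEq a] [DecidableEq b]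
    {V : Matrix m (a ⊕ b) R} {W : Matrix (a ⊕ b) m R} (hWV : W * V = 1) :
    W.submatrix Sum.inr id * V.submatrix id Sum.inr = 1 := by
  rw [← submatrix_mul _ _ _ _ _ Function.bijective_id, hWV, submatrix_one _ Sum.inr_injective]

theorem exists_isUnit_det_mul_eq_fromCols_iff {s d : Type*} [Fintype m] [Fintype s] [Fintype d]
    [DecidableEq s] [DecidableEq d] {V : Matrix m (s ⊕ d) R} {W : Matrix (s ⊕ d) m R}
    (hWV : W * V = 1) {P : Matrix m s R} (hP : V * (W * P) = P) :
    (∃ (E : Matrix m d R) (C : Matrix (s ⊕ d) (s ⊕ d) R),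
        IsUnit C.det ∧ V * C = fromCols P E)
      ↔ ∃ E : Matrix (s ⊕ d) d R, IsUnit (fromCols (W * P) E).det := by
  constructor
  · rintro ⟨E, C, hC, hVC⟩
    refine ⟨W * E, ?_⟩
    rwa [← mul_fromCols, ← hVC, ← Matrix.mul_assoc, hWV, Matrix.one_mul]
  · rintro ⟨E, hE⟩
    exact ⟨V * E, _, hE, by rw [mul_fromCols, hP]⟩

variable [Fintype m] [DecidableEq m] [Fintype a] [Fintype b]

theorem eq_mul_submatrix_inl_of_mul_inr_eq_zero (A : Matrix n m R)
    {V : Matrix m (a ⊕ b) R} {W : Matrix (a ⊕ b) m R} (hVW : V * W = 1)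
    (hAV : ∀ i j, (A * V) i (Sum.inr j) = 0) :
    A = (A * V).submatrix id Sum.inl * W.submatrix Sum.inl id := by
  have hAVb : (A * V).submatrix id Sum.inr = 0 := by ext i j; exact hAV i j
  calc A = A * V * W := by rw [Matrix.mul_assoc, hVW, Matrix.mul_one]
    _ = _ := by rw [mul_eq_add_submatrix_inl_inr, hAVb, Matrix.zero_mul, add_zero]

theorem isUnit_map_submatrix_inl_of_rank_eq_card {K : Type*} [Field K] (f : R →+* K)
    [DecidableEq a] (A : Matrix a m R) (hrank : (A.map f).rank = Fintype.card a)
    {V : Matrix m (a ⊕ b) R} {W : Matrix (a ⊕ b) m R} (hVW : V * W = 1)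
    (hAV : ∀ i j, (A * V) i (Sum.inr j) = 0) :
    IsUnit (((A * V).submatrix id Sum.inl).map f) := by
  apply isUnit_of_rank_eq_card
  apply le_antisymm (rank_le_card_width _)
  calc Fintype.card a = (A.map f).rank := hrank.symm
    _ ≤ _ := by
      conv_lhs => rw [eq_mul_submatrix_inl_of_mul_inr_eq_zero A hVW hAV, Matrix.map_mul]
      exact rank_mul_le_left _ _

theorem submatrix_inl_mul_eq_zero_of_mul_eq_zero {K : Type*} [Field K] {f : R →+* K}
    (hf : Function.Injective f) [DecidableEq a] (A : Matrix a m R)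
    (hrank : (A.map f).rank = Fintype.card a)
    {V : Matrix m (a ⊕ b) R} {W : Matrix (a ⊕ b) m R} (hVW : V * W = 1)
    (hAV : ∀ i j, (A * V) i (Sum.inr j) = 0) {P : Matrix m p R} (hAP : A * P = 0) :
    W.submatrix Sum.inl id * P = 0 := by
  have hH := isUnit_map_submatrix_inl_of_rank_eq_card f A hrank hVW hAV
  let := hH.invertible
  apply map_injective hf
  apply mul_right_injective_of_invertible (((A * V).submatrix id Sum.inl).map f)
  dsimp only
  rw [← Matrix.map_mul, ← Matrix.mul_assoc,
    ← eq_mul_submatrix_inl_of_mul_inr_eq_zero A hVW hAV, hAP, Matrix.map_zero _ (map_zero f),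
    Matrix.mul_zero]

theorem submatrix_inr_mul_submatrix_inr_mul_eq_self {V : Matrix m (a ⊕ b) R}
    {W : Matrix (a ⊕ b) m R} (hVW : V * W = 1) {P : Matrix m p R}
    (hWP : W.submatrix Sum.inl id * P = 0) :
    V.submatrix id Sum.inr * (W.submatrix Sum.inr id * P) = P := by
  calc _ = V * W * P := by
        rw [mul_eq_add_submatrix_inl_inr, Matrix.add_mul, Matrix.mul_assoc, hWP, Matrix.mul_zero,
          zero_add, Matrix.mul_assoc]
    _ = P := by rw [hVW, Matrix.one_mul]

end Matrix

theorem rewrite_in_chosen_invariants_iff_general (r s d m : ℕ)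
    (A : Matrix (Fin r) (Fin m) ℤ)
    (hrank : (A.map ((↑) : ℤ → ℚ)).rank = r)
    (V : Matrix (Fin m) (Fin r ⊕ (Fin s ⊕ Fin d)) ℤ)
    (W : Matrix (Fin r ⊕ (Fin s ⊕ Fin d)) (Fin m) ℤ)
    (hVW : V * W = 1) (hWV : W * V = 1)
    (hAV : ∀ (i : Fin r) (j : Fin s ⊕ Fin d), (A * V) i (Sum.inr j) = 0)
    (P : Matrix (Fin m) (Fin s) ℤ) (hAP : A * P = 0) :
    (∃ (E : Matrix (Fin m) (Fin d) ℤ)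
        (C : Matrix (Fin s ⊕ Fin d) (Fin s ⊕ Fin d) ℤ),
      IsUnit C.det ∧ V.submatrix id Sum.inr * C = Matrix.fromCols P E)
    ↔ (∃ Etil : Matrix (Fin s ⊕ Fin d) (Fin d) ℤ,
        IsUnit (Matrix.fromCols (W.submatrix Sum.inr id * P) Etil).det) := by
  have hrank' : (A.map (Int.castRingHom ℚ)).rank = Fintype.card (Fin r) := by
    rwa [Fintype.card_fin]
  have hWaP := submatrix_inl_mul_eq_zero_of_mul_eq_zero Int.cast_injective A hrank' hVW hAV hAP
  exact exists_isUnit_det_mul_eq_fromCols_iff (submatrix_inr_mul_submatrix_inr_eq_one hWV)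
    (submatrix_inr_mul_submatrix_inr_mul_eq_self hVW hWaP)

/-- Theorem on rewriting with chosen invariants.  Let `A ∈ M_{r×m}(ℤ)`
have rank `r`, let `V` be a Hermite multiplier of `A` (unimodular with the last `m−r`
columns of `AV` zero), `W = V⁻¹`, partitioned `V = [V_𝔞 | V_𝔟]`, `W = [W_𝔞 ; W_𝔟]`, and
let `P ∈ M_{m×s}(ℤ)` with `A·P = 0` and `s ≤ m − r`.  Then there exist `E` and a
unimodular `C` with `V_𝔟·C = [P | E]` if and only if `W_𝔟·P` extends to a unimodular
matrix `[W_𝔟·P | Ẽ]`.  Here `m − r = s + d`. -/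
theorem rewrite_in_chosen_invariants_iff (r s d m : ℕ) (hm : m = r + (s + d))
    (A : Matrix (Fin r) (Fin m) ℤ)
    (hrank : (A.map ((↑) : ℤ → ℚ)).rank = r)
    (V : Matrix (Fin m) (Fin r ⊕ (Fin s ⊕ Fin d)) ℤ)
    (W : Matrix (Fin r ⊕ (Fin s ⊕ Fin d)) (Fin m) ℤ)
    (hVW : V * W = 1) (hWV : W * V = 1)
    (hAV : ∀ (i : Fin r) (j : Fin s ⊕ Fin d), (A * V) i (Sum.inr j) = 0)
    (P : Matrix (Fin m) (Fin s) ℤ) (hAP : A * P = 0) :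
    (∃ (E : Matrix (Fin m) (Fin d) ℤ)
        (C : Matrix (Fin s ⊕ Fin d) (Fin s ⊕ Fin d) ℤ),
      IsUnit C.det ∧ V.submatrix id Sum.inr * C = Matrix.fromCols P E)
    ↔ (∃ Etil : Matrix (Fin s ⊕ Fin d) (Fin d) ℤ,
        IsUnit (Matrix.fromCols (W.submatrix Sum.inr id * P) Etil).det) :=
  rewrite_in_chosen_invariants_iff_general r s d m A hrank V W hVW hWV hAV P hAP
end

section
/- Define T_φ := { c ∈ (kˣ)^n : for every j there exists d_j ∈ kˣ with σ_c(φ(y_j)) = d_j·φ(y_j) } and symmetrically T_ψ := { d ∈ (kˣ)^n : for every i there exists c_i ∈ kˣ with σ_d(ψ(x_i)) = c_i·ψ(x_i) }. Then: (1) T_φ and T_ψ are subgroups of the group (kˣ)^n; (2) the map ρ_φ : T_φ → (kˣ)^n sending c to the unique tuple d = (d_1,…,d_n) with σ_c(φ(y_j)) = d_j·φ(y_j) for all j is a well-defined injective group homomorphism whose image is contained in T_ψ; (3) with ρ_ψ : T_ψ → T_φ defined symmetrically, ρ_ψ ∘ ρ_φ = id on T_φ; consequently ρ_φ is a group isomorphism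 from T_φ onto T_ψ. -/
/-- The field of rational functions `k(x₁, …, x_n)`. -/
abbrev RatFunField (k : Type*) [Field k] (n : ℕ) : Type _ :=
  FractionRing (MvPolynomial (Fin n) k)

/-- The `i`-th indeterminate, viewed inside `k(x₁, …, x_n)`. -/
noncomputable def Xvar (k : Type*) [Field k] (n : ℕ) (i : Fin n) : RatFunField k n :=
  algebraMap (MvPolynomial (Fin n) k) (RatFunField k n) (MvPolynomial.X i)

lemma Xvar_ne_zero (k : Type*) [Field k] (n : ℕ) (i : Fin n) : Xvar k n i ≠ 0 := by
  simpa [Xvar] using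
    (map_ne_zero_iff _ (IsFractionRing.injective (MvPolynomial (Fin n) k) (RatFunField k n))).mpr
      (MvPolynomial.X_ne_zero i)

/-- A `k`-algebra endomorphism of `k(x₁,…,x_n)` is determined by its values on the
indeterminates. -/
lemma ratfun_hom_ext {k : Type*} [Field k] {n : ℕ}
    (F G : RatFunField k n →ₐ[k] RatFunField k n)
    (h : ∀ i, F (Xvar k n i) = G (Xvar k n i)) : F = G := by
  have h3 : F.toRingHom.comp (algebraMap (MvPolynomial (Fin n) k) (RatFunField k n))
      = G.toRingHom.comp (algebraMap (MvPolynomial (Fin n) k) (RatFunField k n)) := by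
    ext p
    · show F _ = G _
      rw [← MvPolynomial.algebraMap_eq, ← IsScalarTower.algebraMap_apply,
        AlgHom.commutes, AlgHom.commutes]
    · exact h p
  have := IsLocalization.ringHom_ext (nonZeroDivisors (MvPolynomial (Fin n) k)) h3
  exact AlgHom.coe_ringHom_injective this

lemma ratfun_algHom_injective {k : Type*} [Field k] {n : ℕ}
    (φ : RatFunField k n →ₐ[k] RatFunField k n) : Function.Injective φ :=
  fun a b h => φ.toRingHom.injective h

/-- Unit scalars acting on a nonzero vector can be cancelled. -/
lemma unit_smul_cancel {k : Type*} [Field k] {n : ℕ} {v : RatFunField k n} (hv : v ≠ 0)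
    {a b : kˣ} (h : (a : k) • v = (b : k) • v) : a = b := by
  have h1 : (algebraMap k (RatFunField k n) (a : k)) * v
      = (algebraMap k (RatFunField k n) (b : k)) * v := by
    rwa [Algebra.smul_def, Algebra.smul_def] at h
  exact Units.ext ((algebraMap k (RatFunField k n)).injective (mul_right_cancel₀ hv h1))

open Classical in
/-- The tuple of scaling factors: `rho F φ j` is the unit `d_j` with
`F (φ (x_j)) = d_j • φ (x_j)`, when it exists. -/
noncomputable def rho {k : Type*} [Field k] {n : ℕ}
    (F φ : RatFunField k n →ₐ[k] RatFunField k n) : Fin n → kˣ := fun j =>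
  if h : ∃ dj : kˣ, F (φ (Xvar k n j)) = (dj : k) • φ (Xvar k n j) then h.choose else 1

lemma rho_spec {k : Type*} [Field k] {n : ℕ}
    {F φ : RatFunField k n →ₐ[k] RatFunField k n}
    (h : ∀ j, ∃ dj : kˣ, F (φ (Xvar k n j)) = (dj : k) • φ (Xvar k n j)) (j : Fin n) :
    F (φ (Xvar k n j)) = (rho F φ j : k) • φ (Xvar k n j) := by
  simp only [rho]
  rw [dif_pos (h j)]
  exact (h j).choose_spec

/-- All one-directional facts, to be applied both ways. -/
lemma side {k : Type*} [Field k] {n : ℕ}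
    (φ ψ : RatFunField k n →ₐ[k] RatFunField k n)
    (hφψ : φ.comp ψ = AlgHom.id k (RatFunField k n))
    (hψφ : ψ.comp φ = AlgHom.id k (RatFunField k n))
    (σ σ' : (Fin n → kˣ) → (RatFunField k n →ₐ[k] RatFunField k n))
    (hσ : ∀ (c : Fin n → kˣ) (i : Fin n), σ c (Xvar k n i) = (c i : k) • Xvar k n i)
    (hσ' : ∀ (d : Fin n → kˣ) (j : Fin n), σ' d (Xvar k n j) = (d j : k) • Xvar k n j) :
    (∀ j, ∃ dj : kˣ, σ 1 (φ (Xvar k n j)) = (dj : k) • φ (Xvar k n j)) ∧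
    (∀ a, (∀ j, ∃ dj : kˣ, σ a (φ (Xvar k n j)) = (dj : k) • φ (Xvar k n j)) →
      ∀ b, (∀ j, ∃ dj : kˣ, σ b (φ (Xvar k n j)) = (dj : k) • φ (Xvar k n j)) →
      (∀ j, ∃ dj : kˣ, σ (a * b) (φ (Xvar k n j)) = (dj : k) • φ (Xvar k n j))) ∧
    (∀ a, (∀ j, ∃ dj : kˣ, σ a (φ (Xvar k n j)) = (dj : k) • φ (Xvar k n j)) →
      (∀ j, ∃ dj : kˣ, σ a⁻¹ (φ (Xvar k n j)) = (dj : k) • φ (Xvar k n j))) ∧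
    (∀ c, (∀ j, ∃ dj : kˣ, σ c (φ (Xvar k n j)) = (dj : k) • φ (Xvar k n j)) →
      ∀ d : Fin n → kˣ, (∀ j, σ c (φ (Xvar k n j)) = (d j : k) • φ (Xvar k n j)) →
      d = rho (σ c) φ) ∧
    (∀ c, (∀ j, ∃ dj : kˣ, σ c (φ (Xvar k n j)) = (dj : k) • φ (Xvar k n j)) →
      ∀ i, σ' (rho (σ c) φ) (ψ (Xvar k n i)) = (c i : k) • ψ (Xvar k n i)) := by
  have hφX_ne : ∀ j, φ (Xvar k n j) ≠ 0 := by
    intro j h0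
    have h1 : φ (Xvar k n j) = φ 0 := by simpa using h0
    exact Xvar_ne_zero k n j (ratfun_algHom_injective φ h1)
  have hpf : ∀ x, ψ (φ x) = x := fun x => by
    have := AlgHom.congr_fun hψφ x; simpa using this
  have hfp : ∀ x, φ (ψ x) = x := fun x => by
    have := AlgHom.congr_fun hφψ x; simpa using this
  have hσone : σ 1 = AlgHom.id k (RatFunField k n) :=
    ratfun_hom_ext _ _ fun i => by simp [hσ]
  have hσmul : ∀ a b, σ (a * b) = (σ a).comp (σ b) := fun a b =>
    ratfun_hom_ext _ _ fun i => by
      simp [hσ, map_smul, smul_smul, mul_comm]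
  refine ⟨?_, ?_, ?_, ?_, ?_⟩
  · intro j
    exact ⟨1, by rw [hσone]; simp⟩
  · intro a ha b hb j
    refine ⟨rho (σ a) φ j * rho (σ b) φ j, ?_⟩
    rw [hσmul, AlgHom.comp_apply, rho_spec hb j, map_smul, rho_spec ha j, smul_smul,
      Units.val_mul, mul_comm ((rho (σ a) φ j : k)) ((rho (σ b) φ j : k))]
  · intro a ha j
    have h0 : (σ a⁻¹).comp (σ a) = AlgHom.id k (RatFunField k n) := by
      rw [← hσmul, inv_mul_cancel, hσone]
    have h1 : σ a⁻¹ (σ a (φ (Xvar k n j))) = φ (Xvar k n j) := by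
      simpa using AlgHom.congr_fun h0 (φ (Xvar k n j))
    rw [rho_spec ha j, map_smul] at h1
    refine ⟨(rho (σ a) φ j)⁻¹, ?_⟩
    have h2 : ((rho (σ a) φ j : k))⁻¹ • ((rho (σ a) φ j : k) • σ a⁻¹ (φ (Xvar k n j)))
        = ((rho (σ a) φ j : k))⁻¹ • φ (Xvar k n j) := by rw [h1]
    rw [inv_smul_smul₀ (Units.ne_zero _)] at h2
    rw [h2, Units.val_inv_eq_inv_val]
  · intro c _ d hd
    funext j
    exact unit_smul_cancel (hφX_ne j) ((hd j).symm.trans (rho_spec ‹_› j))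
  · intro c hc
    have hτ : σ' (rho (σ c) φ) = ψ.comp ((σ c).comp φ) := by
      refine ratfun_hom_ext _ _ fun j => ?_
      rw [hσ', AlgHom.comp_apply, AlgHom.comp_apply, rho_spec hc j, map_smul, hpf]
    intro i
    rw [hτ, AlgHom.comp_apply, AlgHom.comp_apply, hfp, hσ, map_smul]

/-- With `φ : k(y) → k(x)` and `ψ : k(x) → k(y)` mutually inverse
`k`-algebra homomorphisms and `σ c` (resp. `σ' d`) the scaling automorphism of `k(x)`
(resp. `k(y)`), define
`T_φ = { c : σ_c(φ(y_j)) is a scalar multiple d_j·φ(y_j) of φ(y_j) for all j }` and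
symmetrically `T_ψ`.  Then (1) `T_φ` and `T_ψ` are subgroups of `(kˣ)^n`; (2) the map
`ρ_φ` sending `c` to the unique tuple `d` with `σ_c(φ(y_j)) = d_j·φ(y_j)` is a
well-defined injective group homomorphism with image in `T_ψ`; (3) with `ρ_ψ` defined
symmetrically, `ρ_ψ ∘ ρ_φ = id` on `T_φ` and `ρ_φ ∘ ρ_ψ = id` on `T_ψ`, so `ρ_φ` is a
group isomorphism from `T_φ` onto `T_ψ`. -/
theorem scaling_groups_isomorphic (k : Type*) [Field k] (n : ℕ)
    (φ ψ : RatFunField k n →ₐ[k] RatFunField k n)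
    (hφψ : φ.comp ψ = AlgHom.id k (RatFunField k n))
    (hψφ : ψ.comp φ = AlgHom.id k (RatFunField k n))
    (σ σ' : (Fin n → kˣ) → (RatFunField k n →ₐ[k] RatFunField k n))
    (hσ : ∀ (c : Fin n → kˣ) (i : Fin n), σ c (Xvar k n i) = (c i : k) • Xvar k n i)
    (hσ' : ∀ (d : Fin n → kˣ) (j : Fin n), σ' d (Xvar k n j) = (d j : k) • Xvar k n j) :
    -- T_φ and T_ψ
    (fun (Tφ : Set (Fin n → kˣ)) => fun (Tψ : Set (Fin n → kˣ)) =>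
      -- (1) both are subgroups of (kˣ)^n
      ((1 ∈ Tφ ∧ (∀ a ∈ Tφ, ∀ b ∈ Tφ, a * b ∈ Tφ) ∧ (∀ a ∈ Tφ, a⁻¹ ∈ Tφ)) ∧
       (1 ∈ Tψ ∧ (∀ a ∈ Tψ, ∀ b ∈ Tψ, a * b ∈ Tψ) ∧ (∀ a ∈ Tψ, a⁻¹ ∈ Tψ))) ∧
      -- (2), (3): ρ_φ and ρ_ψ
      (∃ ρ ρ' : (Fin n → kˣ) → (Fin n → kˣ),
        -- ρ is well defined on T_φ: it picks the unique tuple d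
        (∀ c ∈ Tφ, ∀ j, σ c (φ (Xvar k n j)) = ((ρ c j : k)) • φ (Xvar k n j)) ∧
        (∀ c ∈ Tφ, ∀ d : Fin n → kˣ,
          (∀ j, σ c (φ (Xvar k n j)) = (d j : k) • φ (Xvar k n j)) → d = ρ c) ∧
        -- group homomorphism on T_φ
        (∀ c ∈ Tφ, ∀ c' ∈ Tφ, ρ (c * c') = ρ c * ρ c') ∧
        -- injective on T_φ
        (∀ c ∈ Tφ, ∀ c' ∈ Tφ, ρ c = ρ c' → c = c') ∧
        -- image contained in T_ψ
        (∀ c ∈ Tφ, ρ c ∈ Tψ) ∧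
        -- ρ' is the symmetric map
        (∀ d ∈ Tψ, ∀ i, σ' d (ψ (Xvar k n i)) = ((ρ' d i : k)) • ψ (Xvar k n i)) ∧
        (∀ d ∈ Tψ, ρ' d ∈ Tφ) ∧
        -- mutually inverse: ρ is a group isomorphism from T_φ onto T_ψ
        (∀ c ∈ Tφ, ρ' (ρ c) = c) ∧
        (∀ d ∈ Tψ, ρ (ρ' d) = d)))
    {c : Fin n → kˣ | ∀ j, ∃ dj : kˣ, σ c (φ (Xvar k n j)) = (dj : k) • φ (Xvar k n j)}
    {d : Fin n → kˣ | ∀ i, ∃ ci : kˣ, σ' d (ψ (Xvar k n i)) = (ci : k) • ψ (Xvar k n i)} := by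
  obtain ⟨hone, hmul, hinv, huniq, hkey⟩ := side φ ψ hφψ hψφ σ σ' hσ hσ'
  obtain ⟨hone', hmul', hinv', huniq', hkey'⟩ := side ψ φ hψφ hφψ σ' σ hσ' hσ
  -- membership in the T-sets is exactly the existential hypothesis
  refine ⟨⟨⟨hone, hmul, hinv⟩, ⟨hone', hmul', hinv'⟩⟩,
    fun c => rho (σ c) φ, fun d => rho (σ' d) ψ, ?_, ?_, ?_, ?_, ?_, ?_, ?_, ?_, ?_⟩
  · intro c hc j
    exact rho_spec hc j
  · intro c hc d hd
    exact huniq c hc d hd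
  · -- homomorphism
    intro c hc c' hc'
    have hcc' := hmul c hc c' hc'
    refine (huniq (c * c') hcc' _ ?_).symm
    intro j
    have hσmul : σ (c * c') = (σ c).comp (σ c') :=
      ratfun_hom_ext _ _ fun i => by simp [hσ, map_smul, smul_smul, mul_comm]
    rw [hσmul, AlgHom.comp_apply, rho_spec hc' j, map_smul, rho_spec hc j, smul_smul,
      Pi.mul_apply, Units.val_mul, mul_comm ((rho (σ c) φ j : k))]
  · -- injective via left inverse
    intro c hc c' hc' h
    have h1 : rho (σ' (rho (σ c) φ)) ψ = c :=
      (huniq' (rho (σ c) φ) (fun i => ⟨c i, hkey c hc i⟩) c (hkey c hc)).symm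
    have h2 : rho (σ' (rho (σ c') φ)) ψ = c' :=
      (huniq' (rho (σ c') φ) (fun i => ⟨c' i, hkey c' hc' i⟩) c' (hkey c' hc')).symm
    have h' : rho (σ c) φ = rho (σ c') φ := h
    rw [← h1, ← h2, h']
  · intro c hc i
    exact ⟨c i, hkey c hc i⟩
  · intro d hd i
    exact rho_spec hd i
  · intro d hd j
    exact ⟨d j, hkey' d hd j⟩
  · intro c hc
    exact (huniq' (rho (σ c) φ) (fun i => ⟨c i, hkey c hc i⟩) c (hkey c hc)).symm
  · intro d hd
    exact (huniq (rho (σ' d) ψ) (fun j => ⟨d j, hkey' d hd j⟩) d (hkey' d hd)).symm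
end
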